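/- arXiv:1111.3975 — 3 statements merged into one kernel-verified Lean document; each statement's English description precedes it below -/
import Mathlib

section
/- The lectic order extends the semilattice order: if a ≤_L b then a ≤ b (where a ≤ b means a = b or a < b). Consequently, if a ≤_L c and b ≤_L c, then a ∨ b ≤ c. -/
open scoped Classical

variable {L ι : Type*}

/-- Δ_{a,b}: indices whose generator is below exactly one of `a`, `b`. -/
def Delta [SemilatticeSup L] (x : ι → L) (a b : L) : Set ι :=
  {j | (x j ≤ a ∧ ¬ x j ≤ b) ∨ (¬ x j ≤ a ∧ x j ≤ b)}

/-- `a <_i b`: `i` is the minimum of `Δ_{a,b}` and `x i ≤ b`. -/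
def LtAt [SemilatticeSup L] [LinearOrder ι] (x : ι → L) (a b : L) (i : ι) : Prop :=
  i ∈ Delta x a b ∧ (∀ j ∈ Delta x a b, i ≤ j) ∧ x i ≤ b

/-- The lectic strict order: `a < b` iff `a <_i b` for some `i`. -/
def LexLt [SemilatticeSup L] [LinearOrder ι] (x : ι → L) (a b : L) : Prop :=
  ∃ i, LtAt x a b i

/-- The (reflexive) lectic order. -/
def LexLe [SemilatticeSup L] [LinearOrder ι] (x : ι → L) (a b : L) : Prop :=
  a = b ∨ LexLt x a b

/-- `{x i | i}` generates `L`: every element is a join of a nonempty subfamily. -/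
def Generates [SemilatticeSup L] (x : ι → L) : Prop :=
  ∀ a : L, ∃ s : Finset ι, ∃ h : s.Nonempty, a = s.sup' h x

/-- `a ⊕ i = (⋁_{j <_I i, x j ≤ a} x j) ∨ x i`. -/
noncomputable def oplus [SemilatticeSup L] [LinearOrder ι] [Fintype ι]
    (x : ι → L) (a : L) (i : ι) : L :=
  (insert i (Finset.univ.filter fun j => j < i ∧ x j ≤ a)).sup'
    (Finset.insert_nonempty _ _) x

section

variable [SemilatticeSup L] {x : ι → L} {a b : L}

theorem Generates.le_of_forall_le_imp (hgen : Generates x) (h : ∀ j, x j ≤ a → x j ≤ b) :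
    a ≤ b := by
  obtain ⟨s, hs, rfl⟩ := hgen a
  exact Finset.sup'_le hs x fun j hj => h j (Finset.le_sup' x hj)

theorem Generates.delta_nonempty (hgen : Generates x) (hab : a ≠ b) :
    (Delta x a b).Nonempty := by
  by_contra hempty
  have hsame : ∀ j, x j ≤ a ↔ x j ≤ b := fun j => by
    by_contra hj
    exact hempty ⟨j, by unfold Delta; tauto⟩
  exact hab (le_antisymm (hgen.le_of_forall_le_imp fun j => (hsame j).1)
    (hgen.le_of_forall_le_imp fun j => (hsame j).2))

theorem lexLt_of_le_of_delta_nonempty [LinearOrder ι] [WellFoundedLT ι] (hab : a ≤ b)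
    (hΔ : (Delta x a b).Nonempty) : LexLt x a b := by
  have hmin := wellFounded_lt.min_mem _ hΔ
  refine ⟨wellFounded_lt.min _ hΔ, hmin, fun j hj => wellFounded_lt.min_le hj, ?_⟩
  rcases hmin with ⟨hxa, -⟩ | ⟨-, hxb⟩
  exacts [hxa.trans hab, hxb]

theorem Generates.lexLe_of_le [LinearOrder ι] [WellFoundedLT ι] (hgen : Generates x)
    (hab : a ≤ b) : LexLe x a b :=
  or_iff_not_imp_left.2 fun hne => lexLt_of_le_of_delta_nonempty hab (hgen.delta_nonempty hne)

end

theorem lexLe_extends [SemilatticeSup L] [LinearOrder ι] [Fintype ι]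
    (x : ι → L) (hgen : Generates x) :
    (∀ a b : L, a ≤ b → LexLe x a b) ∧
      (∀ a b c : L, a ≤ c → b ≤ c → LexLe x (a ⊔ b) c) :=
  ⟨fun _ _ => hgen.lexLe_of_le, fun _ _ _ ha hb => hgen.lexLe_of_le (sup_le ha hb)⟩
end

section
/- If a <_i b, a <_j c, and i <_I j, then c <_i b. -/
open scoped Classical

variable {L ι : Type*}

section LtAt

variable [SemilatticeSup L] {x : ι → L} {a b c : L}

theorem mem_Delta_iff {k : ι} : k ∈ Delta x a b ↔ ¬(x k ≤ a ↔ x k ≤ b) := by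
  show _ ∨ _ ↔ _
  tauto

variable [LinearOrder ι] {i j : ι}

theorem LtAt.le_iff_le_of_lt (h : LtAt x a c j) {k : ι} (hk : k < j) :
    x k ≤ a ↔ x k ≤ c := by
  by_contra hne
  exact (h.2.1 k (mem_Delta_iff.2 hne)).not_gt hk

theorem LtAt.congr_left (h : LtAt x a b i) (hac : ∀ k ≤ i, (x k ≤ a ↔ x k ≤ c)) :
    LtAt x c b i := by
  obtain ⟨hiD, hiMin, hib⟩ := h
  have hDelta : ∀ k ≤ i, (k ∈ Delta x a b ↔ k ∈ Delta x c b) := fun k hk => by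
    simp only [mem_Delta_iff, hac k hk]
  refine ⟨(hDelta i le_rfl).1 hiD, fun k hk => ?_, hib⟩
  by_contra! hki
  exact (hiMin k ((hDelta k hki.le).2 hk)).not_gt hki

end LtAt

theorem helper_one_general [SemilatticeSup L] [LinearOrder ι]
    (x : ι → L) (a b c : L) (i j : ι)
    (hab : LtAt x a b i) (hac : LtAt x a c j) (hij : i < j) :
    LtAt x c b i :=
  hab.congr_left fun _ hk => hac.le_iff_le_of_lt (hk.trans_lt hij)

theorem helper_one [SemilatticeSup L] [LinearOrder ι] [Fintype ι]
    (x : ι → L) (hgen : Generates x) (a b c : L) (i j : ι)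
    (hab : LtAt x a b i) (hac : LtAt x a c j) (hij : i < j) :
    LtAt x c b i :=
  helper_one_general x a b c i j hab hac hij
end

section
/- If a <_i b for some b ∈ L, then a <_i a ⊕ i. -/
open scoped Classical

variable {L ι : Type*}

/-! `a <_i b` says that `a` and `b` lie above the same generators `x j` for `j < i`, while `x i`
lies below `b` but not below `a`. If `a <_i b` then `a ⊕ i ≤ b`, so every generator before `i`
below `a ⊕ i` is below `b`, hence below `a`; conversely each such generator below `a` is a joinand
of `a ⊕ i`. -/

section

variable [SemilatticeSup L] {x : ι → L} {a b : L}

theorem mem_delta_iff {j : ι} : j ∈ Delta x a b ↔ ¬ (x j ≤ a ↔ x j ≤ b) := by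
  change _ ∨ _ ↔ _
  tauto

variable [LinearOrder ι] {i : ι}

theorem ltAt_iff :
    LtAt x a b i ↔ ¬ x i ≤ a ∧ x i ≤ b ∧ ∀ j < i, (x j ≤ a ↔ x j ≤ b) := by
  simp only [LtAt, mem_delta_iff]
  constructor
  · rintro ⟨hi, hmin, hib⟩
    refine ⟨fun hia => hi (iff_of_true hia hib), hib, fun j hji => ?_⟩
    by_contra hj
    exact (hmin j hj).not_gt hji
  · rintro ⟨hia, hib, hbelow⟩
    refine ⟨fun h => hia (h.2 hib), fun j hj => ?_, hib⟩
    by_contra hji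
    exact hj (hbelow j (not_le.1 hji))

variable [Fintype ι] (x a i)

theorem le_oplus_self : x i ≤ oplus x a i :=
  Finset.le_sup' x (Finset.mem_insert_self _ _)

theorem le_oplus_of_lt {j : ι} (hji : j < i) (hja : x j ≤ a) : x j ≤ oplus x a i :=
  Finset.le_sup' x (Finset.mem_insert_of_mem (by simp [hji, hja]))

variable {x a i}

theorem oplus_le (hib : x i ≤ b) (hbelow : ∀ j < i, x j ≤ a → x j ≤ b) :
    oplus x a i ≤ b := by
  refine Finset.sup'_le _ _ fun j hj => ?_
  rcases Finset.mem_insert.1 hj with rfl | hj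
  · exact hib
  · simp only [Finset.mem_filter, Finset.mem_univ, true_and] at hj
    exact hbelow j hj.1 hj.2

end

theorem ltAt_oplus_general [SemilatticeSup L] [LinearOrder ι] [Fintype ι]
    (x : ι → L) (a b : L) (i : ι)
    (hab : LtAt x a b i) :
    LtAt x a (oplus x a i) i := by
  obtain ⟨hia, hib, hbelow⟩ := ltAt_iff.1 hab
  have hle : oplus x a i ≤ b := oplus_le hib fun j hji => (hbelow j hji).1
  refine ltAt_iff.2 ⟨hia, le_oplus_self x a i, fun j hji => ⟨le_oplus_of_lt x a i hji, ?_⟩⟩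
  exact fun hj => (hbelow j hji).2 (hj.trans hle)

theorem ltAt_oplus [SemilatticeSup L] [LinearOrder ι] [Fintype ι]
    (x : ι → L) (hgen : Generates x) (a b : L) (i : ι)
    (hab : LtAt x a b i) :
    LtAt x a (oplus x a i) i :=
  ltAt_oplus_general x a b i hab
end
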